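/- Let R be a right qnil-duo ring that is von Neumann regular (for every a ∈ R there exists b ∈ R with a = a·b·a). Then R is strongly regular: for every a ∈ R there exists b ∈ R with a = a²·b. -/

import Mathlib

/-!
A square-zero element `n` is quasinilpotent. Regularity gives `n = n b n`, so `e = b n` is an
idempotent with `n e = n`; the qnil-duo condition writes `n e = e c`, whence `n = e n = b n² = 0`.
So `R` is reduced, and in a reduced ring `(1 - a b) a = 0` forces `a (1 - a b) = 0`, i.e.
`a = a² b`.
-/

/-- An element `a` of a ring is quasinilpotent if `1 + a * x` is a unit
for every `x` commuting with `a`. -/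
def IsQuasinilpotent {R : Type*} [Ring R] (a : R) : Prop :=
  ∀ x : R, a * x = x * a → IsUnit (1 + a * x)

/-- A ring is right qnil-duo if `R^qnil · a ⊆ a · R^qnil` for every `a`. -/
def IsRightQnilDuo (R : Type*) [Ring R] : Prop :=
  ∀ a b : R, IsQuasinilpotent b → ∃ c : R, IsQuasinilpotent c ∧ b * a = a * c

theorem IsNilpotent.isQuasinilpotent {R : Type*} [Ring R] {a : R} (ha : IsNilpotent a) :
    IsQuasinilpotent a :=
  fun _ hx => (Commute.isNilpotent_mul_right hx ha).isUnit_one_add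

theorem mul_eq_zero_symm_of_isReduced {R : Type*} [Semiring R] [IsReduced R] {a b : R}
    (hab : a * b = 0) : b * a = 0 :=
  eq_zero_of_pow_eq_zero (n := 2) <| by
    rw [sq, mul_assoc, ← mul_assoc a, hab, zero_mul, mul_zero]

theorem eq_sq_mul_of_eq_mul_mul {R : Type*} [Ring R] [IsReduced R] {a b : R}
    (hab : a = a * b * a) : a = a ^ 2 * b := by
  have hleft : (1 - a * b) * a = 0 := by rw [sub_mul, one_mul, ← hab, sub_self]
  have hright : a * (1 - a * b) = 0 := mul_eq_zero_symm_of_isReduced hleft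
  rw [mul_sub, mul_one, sub_eq_zero] at hright
  rw [sq, mul_assoc]
  exact hright

namespace IsRightQnilDuo

variable {R : Type*} [Ring R]

theorem mul_eq_self_of_mul_eq_self (h : IsRightQnilDuo R) {n e : R} (hn : IsQuasinilpotent n)
    (he : IsIdempotentElem e) (hne : n * e = n) : e * n = n := by
  obtain ⟨c, -, hc⟩ := h e n hn
  rw [← hne, hc, ← mul_assoc, he.eq]

theorem isReduced (h : IsRightQnilDuo R) (hreg : ∀ a : R, ∃ b : R, a = a * b * a) :
    IsReduced R := by
  refine (isReduced_iff_pow_one_lt 2 one_lt_two).mpr fun n hn => ?_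
  obtain ⟨b, hb⟩ := hreg n
  have he : IsIdempotentElem (b * n) := by
    rw [IsIdempotentElem, mul_assoc, ← mul_assoc n, ← hb]
  have hbn : b * n * n = n :=
    h.mul_eq_self_of_mul_eq_self (IsNilpotent.isQuasinilpotent ⟨2, hn⟩) he
      (by rw [← mul_assoc, ← hb])
  rw [← hbn, mul_assoc, ← sq, hn, mul_zero]

end IsRightQnilDuo

theorem stmt16 {R : Type*} [Ring R] (h : IsRightQnilDuo R)
    (hreg : ∀ a : R, ∃ b : R, a = a * b * a) :
    ∀ a : R, ∃ b : R, a = a ^ 2 * b := by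
  have := h.isReduced hreg
  intro a
  obtain ⟨b, hb⟩ := hreg a
  exact ⟨b, eq_sq_mul_of_eq_mul_mul hb⟩
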